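/- arXiv:1308.1815 — 2 statements merged into one kernel-verified Lean document; each statement's English description precedes it below -/
import Mathlib

section
/- Let n ≥ 1 and let τ: [0,1] → ℝ be continuous and strictly increasing. Set u*_{i,τ} = E[τ(T_i)] for 0 ≤ i ≤ n, and note τ(0) < u*_{0,τ} ≤ … ≤ u*_{n,τ} < τ(1). Then: (a) the invariant estimator d*_τ(Y;t) = Σ_{i=0}^n u*_{i,τ}·1{Y_i ≤ t < Y_{i+1}} of τ(F) satisfies, for every continuous cumulative distribution function F and every invariant estimator e(Y;t) = Σ_{i=0}^n v_i·1{Y_i ≤ t < Y_{i+1}} with constants v_i ∈ ℝ, E_F[∫_ℝ (e(Y;t) − τ(F(t)))² dF(t)] ≥ E_F[∫_ℝ (d*_τ(Y;t) − τ(F(t)))² dF(t)] = (1/(n+1))·Σ_{i=0}^n Var(τ(T_i)); (b) equivalently, the invariant estimator of F with weights u_i* = τ^{-1}(E[τ(T_i)]) minimizes E_F[∫_ℝ (τ(d(Y;t)) − τ(F(t)))² dF(t)] over all invariant estimators d of F with weights in [0,1]. -/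
open MeasureTheory Set
open scoped ENNReal NNReal

noncomputable section

/-- Number of sample points `x j ≤ t`, as an element of `Fin (n+1)`.
Note `countLE x t = i` iff `Y_i ≤ t < Y_{i+1}` where `Y_1 ≤ … ≤ Y_n` are the
order statistics of `x` and `Y_0 = -∞`, `Y_{n+1} = +∞`. -/
def countLE {n : ℕ} (x : Fin n → ℝ) (t : ℝ) : Fin (n + 1) :=
  ⟨(Finset.univ.filter (fun j => x j ≤ t)).card,
    Nat.lt_succ_of_le ((Finset.card_filter_le _ _).trans (by simp))⟩

/-- The invariant estimator `d(Y;t) = Σ_{i=0}^n u_i · 1{Y_i ≤ t < Y_{i+1}}`. -/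
def invEst {n : ℕ} (u : Fin (n + 1) → ℝ) : (Fin n → ℝ) → ℝ → ℝ :=
  fun x t => u (countLE x t)

/-- The cumulative distribution function of `μ`. -/
def cdfOf (μ : Measure ℝ) (t : ℝ) : ℝ := (μ (Set.Iic t)).toReal

/-- Distribution of an i.i.d. sample of size `n` from `μ`. -/
def sampleMeasure (n : ℕ) (μ : Measure ℝ) : Measure (Fin n → ℝ) :=
  Measure.pi fun _ => μ

/-- `(n+1)·C(n,i)·t^i·(1−t)^{n−i}`, the `Beta(i+1, n−i+1)` density on `(0,1)`. -/
def betaDen (n i : ℕ) (t : ℝ) : ℝ :=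
  ((n : ℝ) + 1) * (n.choose i) * t ^ i * (1 - t) ^ (n - i)


/-- `E[τ(T_i)] = ∫₀¹ τ(t)·f_{T_i}(t) dt`. -/
def betaMean (n : ℕ) (τ : ℝ → ℝ) (i : Fin (n + 1)) : ℝ :=
  ∫ t in Set.Ioo (0 : ℝ) 1, τ t * betaDen n i t

/-- `Var(τ(T_i)) = E[τ(T_i)²] − (E[τ(T_i)])²`. -/
def betaVar (n : ℕ) (τ : ℝ → ℝ) (i : Fin (n + 1)) : ℝ :=
  (∫ t in Set.Ioo (0 : ℝ) 1, (τ t) ^ 2 * betaDen n i t) - (betaMean n τ i) ^ 2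

/-- Risk (in `[0,∞]`) of an estimator `d` of `τ(F)` under integrated squared
error `∫ (d(t) − τ(F(t)))² dF(t)`. -/
def riskSq {n : ℕ} (μ : Measure ℝ) (τ : ℝ → ℝ)
    (d : (Fin n → ℝ) → ℝ → ℝ) : ℝ≥0∞ :=
  ∫⁻ x, (∫⁻ t, ENNReal.ofReal ((d x t - τ (cdfOf μ t)) ^ 2) ∂μ)
    ∂(sampleMeasure n μ)

/-!
For fixed `t`, the number of sample points `≤ t` is `Binomial(n, F t)`, and for continuous `F`
the image of `dF` under `F` is the uniform distribution on `(0,1)` (probability integral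
transform). By Tonelli, the risk of the invariant estimator with weights `v` is therefore
`(n+1)⁻¹ ∑ᵢ E[(vᵢ - τ(Tᵢ))²]`, the `Beta(i+1, n-i+1)` densities being `n+1` times the
Bernstein polynomials, and `E[(vᵢ - τ(Tᵢ))²] = Var τ(Tᵢ) + (vᵢ - E τ(Tᵢ))²` is minimal at
`vᵢ = E τ(Tᵢ)`. Part (b) is the substitution `v = τ ∘ u`. The means `E τ(Tᵢ)` increase with
`i` because `f_{i+1} - f_i` has integral `0` and changes sign once, at `(i+1)/(n+1)`.
-/

open Nat Filter Topology

lemma integral_pow_mul_one_sub_pow_succ (i k : ℕ) :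
    ((i : ℝ) + 1) * ∫ x in (0 : ℝ)..1, x ^ i * (1 - x) ^ (k + 1) =
      ((k : ℝ) + 1) * ∫ x in (0 : ℝ)..1, x ^ (i + 1) * (1 - x) ^ k := by
  have hderiv : ∀ x : ℝ, HasDerivAt (fun x : ℝ => x ^ (i + 1) * (1 - x) ^ (k + 1))
      (((i : ℝ) + 1) * (x ^ i * (1 - x) ^ (k + 1)) -
        ((k : ℝ) + 1) * (x ^ (i + 1) * (1 - x) ^ k)) x := by
    intro x
    refine ((hasDerivAt_pow (i + 1) x).mul
      (((hasDerivAt_id' x).const_sub 1).pow (k + 1))).congr_deriv ?_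
    simp only [Pi.pow_apply, Nat.cast_add, Nat.cast_one, add_tsub_cancel_right]
    ring
  have hzero := intervalIntegral.integral_eq_sub_of_hasDerivAt (a := 0) (b := 1)
    (fun x _ => hderiv x) (by apply Continuous.intervalIntegrable; fun_prop)
  rw [intervalIntegral.integral_sub (by apply Continuous.intervalIntegrable; fun_prop)
    (by apply Continuous.intervalIntegrable; fun_prop), intervalIntegral.integral_const_mul,
    intervalIntegral.integral_const_mul] at hzero
  simp only [sub_self, zero_pow (succ_ne_zero _), mul_zero, zero_mul, sub_zero] at hzero
  linarith

lemma integral_pow_mul_one_sub_pow (i k : ℕ) :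
    ∫ x in (0 : ℝ)..1, x ^ i * (1 - x) ^ k = (i ! * k ! : ℝ) / (i + k + 1)! := by
  induction k generalizing i with
  | zero =>
    simp only [pow_zero, mul_one, integral_pow, one_pow, zero_pow (succ_ne_zero i), sub_zero,
      add_zero, factorial_succ i, factorial_zero]
    push_cast
    field_simp
  | succ k ih =>
    have hrec := integral_pow_mul_one_sub_pow_succ i k
    rw [ih (i + 1), show i + 1 + k + 1 = i + (k + 1) + 1 by ring, Nat.factorial_succ i] at hrec
    rw [Nat.factorial_succ k]
    push_cast at hrec ⊢
    have : ((i : ℝ) + 1) ≠ 0 := by positivity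
    field_simp at hrec ⊢
    linear_combination hrec

lemma setIntegral_Ioo_eq_intervalIntegral {a b : ℝ} (hab : a ≤ b) (f : ℝ → ℝ) :
    ∫ t in Ioo a b, f t = ∫ t in a..b, f t := by
  rw [intervalIntegral.integral_of_le hab, integral_Ioc_eq_integral_Ioo]

lemma continuous_betaDen (n i : ℕ) : Continuous (betaDen n i) := by
  unfold betaDen
  fun_prop

lemma betaDen_nonneg (n i : ℕ) {t : ℝ} (ht : t ∈ Icc (0 : ℝ) 1) : 0 ≤ betaDen n i t := by
  have := ht.1
  have := sub_nonneg.2 ht.2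
  unfold betaDen
  positivity

lemma betaDen_pos {n i : ℕ} (hi : i ≤ n) {t : ℝ} (ht : t ∈ Ioo (0 : ℝ) 1) :
    0 < betaDen n i t := by
  have := ht.1
  have := sub_pos.2 ht.2
  have : 0 < (n.choose i : ℝ) := by exact_mod_cast Nat.choose_pos hi
  unfold betaDen
  positivity

lemma integral_betaDen {n i : ℕ} (hi : i ≤ n) : ∫ t in Ioo (0 : ℝ) 1, betaDen n i t = 1 := by
  simp only [setIntegral_Ioo_eq_intervalIntegral zero_le_one, betaDen, mul_assoc,
    intervalIntegral.integral_const_mul, integral_pow_mul_one_sub_pow]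
  rw [show i + (n - i) + 1 = n + 1 by omega, Nat.factorial_succ]
  have hchoose : (n.choose i * i ! * (n - i)! : ℝ) = n ! := by
    exact_mod_cast Nat.choose_mul_factorial_mul_factorial hi
  push_cast
  field_simp
  linear_combination hchoose

lemma betaDen_succ_sub_mul_nonneg {n i : ℕ} (hi : i < n) {t : ℝ} (ht : t ∈ Icc (0 : ℝ) 1) :
    0 ≤ (betaDen n (i + 1) t - betaDen n i t) * (t - (i + 1) / (n + 1)) := by
  obtain ⟨k, hk⟩ : ∃ k, n - (i + 1) = k := ⟨_, rfl⟩
  have hki : n - i = k + 1 := by omega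
  have hn : (n : ℝ) = i + 1 + k := by norm_cast; omega
  have hchoose : (n.choose (i + 1) : ℝ) = n.choose i * (k + 1) / (i + 1) := by
    have := Nat.choose_succ_right_eq n i
    rw [hki] at this
    field_simp
    exact_mod_cast this
  have := ht.1
  have := sub_nonneg.2 ht.2
  have key : (betaDen n (i + 1) t - betaDen n i t) * (t - (i + 1) / (n + 1)) =
      n.choose i / (i + 1) * t ^ i * (1 - t) ^ k * ((n + 1) * t - (i + 1)) ^ 2 := by
    simp only [betaDen, hk, hki, hchoose, hn]
    field_simp
    ring
  rw [key]
  positivity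

lemma integrableOn_Ioo_of_continuousOn_Icc {a b : ℝ} {f : ℝ → ℝ}
    (hf : ContinuousOn f (Icc a b)) : IntegrableOn f (Ioo a b) :=
  hf.integrableOn_Icc.mono_set Ioo_subset_Icc_self

lemma integrableOn_betaDen (n i : ℕ) : IntegrableOn (betaDen n i) (Ioo 0 1) :=
  integrableOn_Ioo_of_continuousOn_Icc (continuous_betaDen n i).continuousOn

/-- Single crossing: `∫ σ h = ∫ (σ - σ c) h` as `∫ h = 0`, and the new integrand is nonnegative. -/
lemma setIntegral_mul_nonneg_of_sign_change {s : Set ℝ} {μ : Measure ℝ} (hs : MeasurableSet s)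
    {σ h : ℝ → ℝ} {c : ℝ} (hσ : MonotoneOn σ s) (hc : c ∈ s) (hh : IntegrableOn h s μ)
    (hσh : IntegrableOn (fun t => σ t * h t) s μ) (h0 : ∫ t in s, h t ∂μ = 0)
    (hsign : ∀ t ∈ s, 0 ≤ h t * (t - c)) : 0 ≤ ∫ t in s, σ t * h t ∂μ := by
  have hshift : ∫ t in s, σ t * h t ∂μ = ∫ t in s, (σ t - σ c) * h t ∂μ := by
    simp_rw [sub_mul]
    rw [integral_sub hσh (hh.const_mul _), integral_const_mul, h0, mul_zero, sub_zero]
  rw [hshift]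
  refine setIntegral_nonneg hs fun t ht => ?_
  rcases lt_trichotomy t c with htc | rfl | hct
  · exact mul_nonneg_of_nonpos_of_nonpos (sub_nonpos.2 (hσ ht hc htc.le))
      (nonpos_of_mul_nonneg_left (hsign t ht) (sub_neg.2 htc))
  · simp
  · exact mul_nonneg (sub_nonneg.2 (hσ hc ht hct.le))
      (nonneg_of_mul_nonneg_left (hsign t ht) (sub_pos.2 hct))

lemma lt_setIntegral_mul_of_forall_lt {f σ : ℝ → ℝ} {a b m : ℝ} (hab : a < b)
    (hf : ContinuousOn f (Icc a b)) (hσ : ContinuousOn σ (Icc a b))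
    (hf1 : ∫ t in Ioo a b, f t = 1) (hfpos : ∀ t ∈ Ioo a b, 0 < f t)
    (hm : ∀ t ∈ Ioo a b, m < σ t) : m < ∫ t in Ioo a b, σ t * f t := by
  have hpos : 0 < ∫ t in Ioo a b, (σ t - m) * f t := by
    rw [setIntegral_Ioo_eq_intervalIntegral hab.le]
    refine intervalIntegral.intervalIntegral_pos_of_pos_on ?_
      (fun t ht => mul_pos (sub_pos.2 (hm t ht)) (hfpos t ht)) hab
    exact ((hσ.sub continuousOn_const).mul hf).intervalIntegrable_of_Icc hab.le
  simp_rw [sub_mul] at hpos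
  rw [integral_sub (integrableOn_Ioo_of_continuousOn_Icc (f := fun t => σ t * f t) (hσ.mul hf))
    ((integrableOn_Ioo_of_continuousOn_Icc hf).const_mul m), integral_const_mul, hf1,
    mul_one] at hpos
  linarith

lemma setIntegral_mul_lt_of_forall_lt {f σ : ℝ → ℝ} {a b m : ℝ} (hab : a < b)
    (hf : ContinuousOn f (Icc a b)) (hσ : ContinuousOn σ (Icc a b))
    (hf1 : ∫ t in Ioo a b, f t = 1) (hfpos : ∀ t ∈ Ioo a b, 0 < f t)
    (hm : ∀ t ∈ Ioo a b, σ t < m) : ∫ t in Ioo a b, σ t * f t < m := by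
  have := lt_setIntegral_mul_of_forall_lt hab hf hσ.neg hf1 hfpos (m := -m)
    fun t ht => neg_lt_neg (hm t ht)
  simp only [Pi.neg_apply, neg_mul, integral_neg] at this
  linarith

section BetaMean

variable {n : ℕ} {σ : ℝ → ℝ}

lemma integrableOn_mul_betaDen (hσ : ContinuousOn σ (Icc 0 1)) (i : ℕ) :
    IntegrableOn (fun t => σ t * betaDen n i t) (Ioo 0 1) :=
  integrableOn_Ioo_of_continuousOn_Icc (hσ.mul (continuous_betaDen n i).continuousOn)

lemma betaMean_monotone (hσc : ContinuousOn σ (Icc 0 1)) (hσm : MonotoneOn σ (Icc 0 1)) :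
    Monotone (betaMean n σ) := by
  refine Fin.monotone_iff_le_succ.2 fun i => ?_
  have hc : ((i : ℝ) + 1) / (n + 1) ∈ Ioo (0 : ℝ) 1 := by
    have : (i : ℝ) + 1 < n + 1 := by exact_mod_cast Nat.succ_lt_succ i.isLt
    exact ⟨by positivity, (div_lt_one (by positivity)).2 this⟩
  have hdiff : betaMean n σ i.succ - betaMean n σ i.castSucc =
      ∫ t in Ioo 0 1, σ t * (betaDen n (i + 1) t - betaDen n i t) := by
    simp only [betaMean, Fin.val_succ, Fin.val_castSucc, mul_sub]
    rw [integral_sub (integrableOn_mul_betaDen hσc _) (integrableOn_mul_betaDen hσc _)]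
  have hden := integrableOn_betaDen n
  have hstep := setIntegral_mul_nonneg_of_sign_change
    (h := fun t => betaDen n (i + 1) t - betaDen n i t) measurableSet_Ioo
    (hσm.mono Ioo_subset_Icc_self) hc ((hden (i + 1)).sub (hden i))
    (by simp only [mul_sub]
        exact (integrableOn_mul_betaDen hσc (i + 1)).sub (integrableOn_mul_betaDen hσc i))
    (by rw [integral_sub (hden _) (hden _), integral_betaDen i.isLt, integral_betaDen i.isLt.le,
      sub_self])
    (fun t ht => betaDen_succ_sub_mul_nonneg i.isLt (Ioo_subset_Icc_self ht))
  linarith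

lemma lt_betaMean_zero (hσc : ContinuousOn σ (Icc 0 1)) (hσm : StrictMonoOn σ (Icc 0 1)) :
    σ 0 < betaMean n σ 0 :=
  lt_setIntegral_mul_of_forall_lt zero_lt_one (continuous_betaDen n 0).continuousOn hσc
    (integral_betaDen (zero_le n))
    (fun _ ht => betaDen_pos (zero_le n) ht)
    (fun _ ht => hσm (left_mem_Icc.2 zero_le_one) (Ioo_subset_Icc_self ht) ht.1)

lemma betaMean_last_lt (hσc : ContinuousOn σ (Icc 0 1)) (hσm : StrictMonoOn σ (Icc 0 1)) :
    betaMean n σ (Fin.last n) < σ 1 :=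
  setIntegral_mul_lt_of_forall_lt zero_lt_one (continuous_betaDen n n).continuousOn hσc
    (integral_betaDen le_rfl)
    (fun _ ht => betaDen_pos le_rfl ht)
    (fun _ ht => hσm (Ioo_subset_Icc_self ht) (right_mem_Icc.2 zero_le_one) ht.2)

end BetaMean

section Sample

variable {n : ℕ}

def levelBox (t : ℝ) (S : Finset (Fin n)) : Set (Fin n → ℝ) :=
  univ.pi fun j => if j ∈ S then Iic t else Ioi t

lemma mem_levelBox_iff {t : ℝ} {S : Finset (Fin n)} {x : Fin n → ℝ} :
    x ∈ levelBox t S ↔ Finset.univ.filter (fun j => x j ≤ t) = S := by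
  simp only [levelBox, mem_univ_pi, Finset.ext_iff, Finset.mem_filter, Finset.mem_univ, true_and]
  refine forall_congr' fun j => ?_
  by_cases hj : j ∈ S <;> simp [hj]

lemma measurableSet_levelBox (t : ℝ) (S : Finset (Fin n)) : MeasurableSet (levelBox t S) :=
  MeasurableSet.univ_pi fun j => by split_ifs; exacts [measurableSet_Iic, measurableSet_Ioi]

lemma setOf_countLE_eq_biUnion (t : ℝ) (i : Fin (n + 1)) :
    {x : Fin n → ℝ | countLE x t = i} =
      ⋃ S ∈ Finset.univ.powersetCard (i : ℕ), levelBox t S := by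
  ext x
  simp only [mem_ofPred_eq, mem_iUnion, Finset.mem_powersetCard, mem_levelBox_iff, exists_prop,
    Finset.subset_univ, true_and, countLE, Fin.ext_iff]
  exact ⟨fun h => ⟨_, h, rfl⟩, fun ⟨_, hS, hx⟩ => hx ▸ hS⟩

lemma sampleMeasure_levelBox (μ : Measure ℝ) [SigmaFinite μ] (t : ℝ) (S : Finset (Fin n)) :
    sampleMeasure n μ (levelBox t S) = μ (Iic t) ^ S.card * μ (Ioi t) ^ (n - S.card) := by
  rw [sampleMeasure, levelBox, Measure.pi_pi]
  simp only [apply_ite μ]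
  rw [Finset.prod_ite, Finset.prod_const, Finset.prod_const, Finset.filter_mem_eq_inter,
    Finset.univ_inter, Finset.filter_not, Finset.filter_mem_eq_inter, Finset.univ_inter,
    Finset.card_sdiff_of_subset (Finset.subset_univ S), Finset.card_univ, Fintype.card_fin]

lemma sampleMeasure_countLE (μ : Measure ℝ) [SigmaFinite μ] (t : ℝ) (i : Fin (n + 1)) :
    sampleMeasure n μ {x | countLE x t = i} =
      n.choose i * μ (Iic t) ^ (i : ℕ) * μ (Ioi t) ^ (n - i) := by
  have hdisj : ((Finset.univ.powersetCard (i : ℕ) : Finset (Finset (Fin n))) :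
      Set (Finset (Fin n))).PairwiseDisjoint (levelBox t) :=
    fun S _ S' _ hSS' => Set.disjoint_left.2 fun x hS hS' =>
      hSS' ((mem_levelBox_iff.1 hS).symm.trans (mem_levelBox_iff.1 hS'))
  rw [setOf_countLE_eq_biUnion,
    measure_biUnion_finset hdisj fun S _ => measurableSet_levelBox t S,
    Finset.sum_congr rfl fun S hS => by
      rw [sampleMeasure_levelBox, (Finset.mem_powersetCard.1 hS).2],
    Finset.sum_const, Finset.card_powersetCard, Finset.card_univ, Fintype.card_fin, nsmul_eq_mul,
    mul_assoc]

lemma measurable_countLE :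
    Measurable fun p : (Fin n → ℝ) × ℝ => countLE p.1 p.2 := by
  refine measurable_to_countable' fun i => ?_
  have hcard : Measurable fun p : (Fin n → ℝ) × ℝ =>
      ∑ j : Fin n, if p.1 j ≤ p.2 then 1 else 0 :=
    Finset.measurable_sum _ fun j _ => Measurable.ite
      (measurableSet_le (measurable_pi_apply j |>.comp measurable_fst) measurable_snd)
      measurable_const measurable_const
  convert hcard (measurableSet_singleton (i : ℕ)) using 1
  ext p
  simp only [mem_preimage, mem_singleton_iff, Fin.ext_iff, countLE, Finset.card_filter]

end Sample

section ProbabilityIntegralTransform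

variable (μ : Measure ℝ) [IsProbabilityMeasure μ]

lemma cdfOf_eq_cdf : cdfOf μ = ProbabilityTheory.cdf μ :=
  funext fun t => (ProbabilityTheory.cdf_eq_real μ t).symm

lemma cdfOf_mem_Icc (t : ℝ) : cdfOf μ t ∈ Icc (0 : ℝ) 1 := by
  rw [cdfOf_eq_cdf]
  exact ⟨ProbabilityTheory.cdf_nonneg μ t, ProbabilityTheory.cdf_le_one μ t⟩

lemma monotone_cdfOf : Monotone (cdfOf μ) :=
  cdfOf_eq_cdf μ ▸ ProbabilityTheory.monotone_cdf μ

lemma ofReal_cdfOf (t : ℝ) : ENNReal.ofReal (cdfOf μ t) = μ (Iic t) :=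
  ENNReal.ofReal_toReal (measure_ne_top μ _)

lemma ofReal_one_sub_cdfOf (t : ℝ) : ENNReal.ofReal (1 - cdfOf μ t) = μ (Ioi t) := by
  rw [← compl_Iic, prob_compl_eq_one_sub measurableSet_Iic, ← ofReal_cdfOf,
    ENNReal.ofReal_sub _ (cdfOf_mem_Icc μ t).1, ENNReal.ofReal_one]

variable {μ}

/-- A nonempty sublevel set `{t | cdfOf μ t ≤ s}` with `s < 1` is a half-line `Iic c` with
`cdfOf μ c = s`; an empty one forces `s ≤ 0`, where `ENNReal.ofReal s = 0`. -/
lemma measure_cdfOf_le (hc : Continuous (cdfOf μ)) (s : ℝ) :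
    μ {t | cdfOf μ t ≤ s} = ENNReal.ofReal (min 1 s) := by
  rcases le_or_gt 1 s with hs1 | hs1
  · have : {t | cdfOf μ t ≤ s} = univ :=
      eq_univ_of_forall fun t => (cdfOf_mem_Icc μ t).2.trans hs1
    simp [this, min_eq_left hs1]
  rw [min_eq_right hs1.le]
  set A := {t | cdfOf μ t ≤ s}
  rcases A.eq_empty_or_nonempty with hA | hA
  · have hlim : Tendsto (cdfOf μ) atBot (𝓝 0) :=
      cdfOf_eq_cdf μ ▸ ProbabilityTheory.tendsto_cdf_atBot μ
    have hs0 : s ≤ 0 := ge_of_tendsto' hlim fun t => (not_le.1 fun ht => hA.subset ht).le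
    simp [hA, ENNReal.ofReal_eq_zero.2 hs0]
  have hbdd : BddAbove A := by
    obtain ⟨b, hb⟩ := ((cdfOf_eq_cdf μ ▸ ProbabilityTheory.tendsto_cdf_atTop μ).eventually
      (lt_mem_nhds hs1)).exists_forall_of_atTop
    exact ⟨b, fun t ht => le_of_not_gt fun hbt => (hb t hbt.le).not_ge ht⟩
  set c := sSup A
  have hcA : c ∈ A := (isClosed_le hc continuous_const).csSup_mem hA hbdd
  have hAc : A = Iic c :=
    Subset.antisymm (fun t ht => le_csSup hbdd ht) fun t ht => (monotone_cdfOf μ ht).trans hcA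
  have hFc : cdfOf μ c = s := by
    refine le_antisymm hcA (not_lt.1 fun hlt => ?_)
    obtain ⟨t, hct, hts⟩ := ((frequently_gt_nhds c).and_eventually
      ((hc.tendsto c).eventually (gt_mem_nhds hlt))).exists
    exact hct.not_ge (le_csSup hbdd hts.le)
  rw [hAc, ← ofReal_cdfOf, hFc]

lemma map_cdfOf (hc : Continuous (cdfOf μ)) :
    μ.map (cdfOf μ) = volume.restrict (Ioc 0 1) := by
  have : IsProbabilityMeasure (μ.map (cdfOf μ)) :=
    Measure.isProbabilityMeasure_map hc.measurable.aemeasurable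
  refine Measure.ext_of_Iic _ _ fun s => ?_
  rw [Measure.map_apply hc.measurable measurableSet_Iic, Measure.restrict_apply measurableSet_Iic,
    inter_comm, Ioc_inter_Iic, Real.volume_Ioc, sub_zero]
  exact measure_cdfOf_le hc s

end ProbabilityIntegralTransform

section Risk

variable {n : ℕ} {μ : Measure ℝ} [IsProbabilityMeasure μ] {σ : ℝ → ℝ}

instance : IsProbabilityMeasure (sampleMeasure n μ) := by
  unfold sampleMeasure
  infer_instance

lemma lintegral_sampleMeasure_countLE (t : ℝ) (g : Fin (n + 1) → ℝ≥0∞) :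
    ∫⁻ x, g (countLE x t) ∂sampleMeasure n μ =
      ∑ i, g i * ENNReal.ofReal (betaDen n i (cdfOf μ t) / (n + 1)) := by
  have hmeas : Measurable fun x : Fin n → ℝ => countLE x t :=
    measurable_countLE.comp (measurable_id.prodMk measurable_const)
  rw [← lintegral_map (measurable_of_countable g) hmeas, lintegral_fintype]
  refine Finset.sum_congr rfl fun i _ => ?_
  obtain ⟨h0, h1⟩ := cdfOf_mem_Icc μ t
  have hden : betaDen n i (cdfOf μ t) / (n + 1) =
      n.choose i * cdfOf μ t ^ (i : ℕ) * (1 - cdfOf μ t) ^ (n - i) := by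
    unfold betaDen
    field_simp
  rw [Measure.map_apply hmeas (measurableSet_singleton i)]
  simp only [preimage, mem_singleton_iff]
  rw [sampleMeasure_countLE,
    ← ofReal_cdfOf, ← ofReal_one_sub_cdfOf, hden, ENNReal.ofReal_mul (by positivity),
    ENNReal.ofReal_mul (by positivity), ENNReal.ofReal_natCast, ENNReal.ofReal_pow h0,
    ENNReal.ofReal_pow (sub_nonneg.2 h1)]

lemma integral_sq_sub_mul_betaDen (hσ : ContinuousOn σ (Icc 0 1)) (i : Fin (n + 1)) (a : ℝ) :
    ∫ t in Ioo (0 : ℝ) 1, (a - σ t) ^ 2 * betaDen n i t =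
      betaVar n σ i + (a - betaMean n σ i) ^ 2 := by
  have hden := integrableOn_betaDen n i
  have hσ2 := integrableOn_mul_betaDen (n := n) (σ := fun t => σ t ^ 2) (hσ.pow 2) i
  have hσ1 := (integrableOn_mul_betaDen (n := n) hσ i).const_mul (2 * a)
  have hexpand : (fun t => (a - σ t) ^ 2 * betaDen n i t) = fun t =>
      a ^ 2 * betaDen n i t - 2 * a * (σ t * betaDen n i t) + σ t ^ 2 * betaDen n i t := by
    funext t
    ring
  rw [hexpand, integral_add (f := fun t => a ^ 2 * betaDen n i t - 2 * a * (σ t * betaDen n i t))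
    ((hden.const_mul _).sub hσ1) hσ2, integral_sub (hden.const_mul _) hσ1,
    integral_const_mul, integral_const_mul, integral_betaDen i.is_le]
  unfold betaVar betaMean
  ring

theorem riskSq_invEst (hc : Continuous (cdfOf μ)) (hσ : ContinuousOn σ (Icc 0 1))
    (v : Fin (n + 1) → ℝ) :
    riskSq μ σ (invEst v) =
      ENNReal.ofReal (∑ i, (betaVar n σ i + (v i - betaMean n σ i) ^ 2) / (n + 1)) := by
  set R : ℝ → ℝ := fun s => ∑ i, (v i - σ s) ^ 2 * betaDen n i s / (n + 1)
  have hσF : Continuous fun t => σ (cdfOf μ t) := hσ.comp_continuous hc (cdfOf_mem_Icc μ)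
  have hR : ContinuousOn R (Icc 0 1) := by
    have := continuous_betaDen n
    fun_prop
  have hR_nonneg : ∀ s ∈ Icc (0 : ℝ) 1, 0 ≤ R s := fun s hs =>
    Finset.sum_nonneg fun i _ => by have := betaDen_nonneg n i hs; positivity
  have hmeas : Measurable (Function.uncurry fun x t =>
      ENNReal.ofReal ((invEst v x t - σ (cdfOf μ t)) ^ 2)) :=
    ((((measurable_of_countable v).comp measurable_countLE).sub
      (hσF.measurable.comp measurable_snd)).pow_const 2).ennreal_ofReal
  calc riskSq μ σ (invEst v)
      = ∫⁻ t, ∫⁻ x, ENNReal.ofReal ((v (countLE x t) - σ (cdfOf μ t)) ^ 2)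
          ∂sampleMeasure n μ ∂μ := lintegral_lintegral_swap hmeas.aemeasurable
    _ = ∫⁻ t, ENNReal.ofReal (R (cdfOf μ t)) ∂μ := by
        refine lintegral_congr fun t => ?_
        rw [lintegral_sampleMeasure_countLE t fun i => ENNReal.ofReal ((v i - σ (cdfOf μ t)) ^ 2),
          ENNReal.ofReal_sum_of_nonneg fun i _ => by
            have := betaDen_nonneg n i (cdfOf_mem_Icc μ t); positivity]
        refine Finset.sum_congr rfl fun i _ => ?_
        rw [← ENNReal.ofReal_mul (sq_nonneg _), mul_div_assoc]
    _ = ∫⁻ s in Ioc 0 1, ENNReal.ofReal (R s) := by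
        have hRm : AEMeasurable (fun s => ENNReal.ofReal (R s)) (volume.restrict (Ioc 0 1)) :=
          ((hR.mono Ioc_subset_Icc_self).aemeasurable measurableSet_Ioc).ennreal_ofReal
        rw [← map_cdfOf hc] at hRm ⊢
        exact (lintegral_map' hRm hc.aemeasurable).symm
    _ = ENNReal.ofReal (∫ s in Ioc 0 1, R s) := by
        refine (ofReal_integral_eq_lintegral_ofReal ?_ ?_).symm
        · exact hR.integrableOn_Icc.mono_set Ioc_subset_Icc_self
        · exact (ae_restrict_iff' measurableSet_Ioc).2
            (.of_forall fun s hs => hR_nonneg s (Ioc_subset_Icc_self hs))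
    _ = _ := by
        rw [integral_Ioc_eq_integral_Ioo, integral_finsetSum]
        · simp only [integral_div, integral_sq_sub_mul_betaDen hσ]
        · exact fun i _ => (integrableOn_Ioo_of_continuousOn_Icc (by
            have := continuous_betaDen n i; fun_prop)).div_const _

end Risk

section BestInvariant

variable {n : ℕ} {μ : Measure ℝ} [IsProbabilityMeasure μ] {σ : ℝ → ℝ}

theorem riskSq_invEst_betaMean_le (hc : Continuous (cdfOf μ)) (hσ : ContinuousOn σ (Icc 0 1))
    (v : Fin (n + 1) → ℝ) : riskSq μ σ (invEst (betaMean n σ)) ≤ riskSq μ σ (invEst v) := by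
  rw [riskSq_invEst hc hσ, riskSq_invEst hc hσ]
  refine ENNReal.ofReal_le_ofReal (Finset.sum_le_sum fun i _ => ?_)
  rw [sub_self, zero_pow two_ne_zero, add_zero]
  gcongr
  exact le_add_of_nonneg_right (sq_nonneg _)

theorem riskSq_invEst_betaMean (hc : Continuous (cdfOf μ)) (hσ : ContinuousOn σ (Icc 0 1)) :
    riskSq μ σ (invEst (betaMean n σ)) =
      ENNReal.ofReal (1 / ((n : ℝ) + 1) * ∑ i, betaVar n σ i) := by
  simp [riskSq_invEst hc hσ, div_eq_inv_mul, Finset.mul_sum]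

end BestInvariant

theorem best_invariant_squared_error_general
    {n : ℕ}
    (τ : ℝ → ℝ) (hτc : ContinuousOn τ (Set.Icc 0 1))
    (hτm : StrictMonoOn τ (Set.Icc 0 1)) :
    (τ 0 < betaMean n τ 0 ∧ Monotone (betaMean n τ) ∧
      betaMean n τ (Fin.last n) < τ 1) ∧
    (∀ (μ : Measure ℝ), IsProbabilityMeasure μ → Continuous (cdfOf μ) →
      (∀ v : Fin (n + 1) → ℝ,
        riskSq μ τ (invEst (betaMean n τ)) ≤ riskSq μ τ (invEst v)) ∧
      riskSq μ τ (invEst (betaMean n τ)) =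
        ENNReal.ofReal ((1 / ((n : ℝ) + 1)) * ∑ i : Fin (n + 1), betaVar n τ i)) ∧
    (∀ ustar : Fin (n + 1) → ℝ,
      (∀ i, ustar i ∈ Set.Icc (0 : ℝ) 1 ∧ τ (ustar i) = betaMean n τ i) →
      ∀ (μ : Measure ℝ), IsProbabilityMeasure μ → Continuous (cdfOf μ) →
        ∀ u : Fin (n + 1) → ℝ, (∀ i, u i ∈ Set.Icc (0 : ℝ) 1) →
          riskSq μ τ (fun x t => τ (invEst ustar x t)) ≤
            riskSq μ τ (fun x t => τ (invEst u x t))) := by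
  refine ⟨⟨lt_betaMean_zero hτc hτm, betaMean_monotone hτc hτm.monotoneOn,
    betaMean_last_lt hτc hτm⟩, fun μ _ hc => ⟨riskSq_invEst_betaMean_le hc hτc,
    riskSq_invEst_betaMean hc hτc⟩, fun ustar hustar μ _ hc u _ => ?_⟩
  have hstar : (fun x t => τ (invEst ustar x t)) = invEst (betaMean n τ) :=
    funext₂ fun x t => (hustar (countLE x t)).2
  rw [hstar]
  exact riskSq_invEst_betaMean_le hc hτc (τ ∘ u)

/-- under integrated squared error loss, (a) the invariant
estimator of `τ(F)` with weights `u*_{i,τ} = E[τ(T_i)]` is best invariant with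
constant risk `(1/(n+1))·Σ_i Var(τ(T_i))`, and (b) equivalently the invariant
estimator of `F` with weights `u_i* = τ⁻¹(E[τ(T_i)])` minimizes
`E_F[∫ (τ(d(Y;t)) − τ(F(t)))² dF(t)]` among invariant estimators; moreover
`τ(0) < u*_{0,τ} ≤ … ≤ u*_{n,τ} < τ(1)`. -/
theorem best_invariant_squared_error
    {n : ℕ} (hn : 1 ≤ n)
    (τ : ℝ → ℝ) (hτc : ContinuousOn τ (Set.Icc 0 1))
    (hτm : StrictMonoOn τ (Set.Icc 0 1)) :
    (τ 0 < betaMean n τ 0 ∧ Monotone (betaMean n τ) ∧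
      betaMean n τ (Fin.last n) < τ 1) ∧
    (∀ (μ : Measure ℝ), IsProbabilityMeasure μ → Continuous (cdfOf μ) →
      (∀ v : Fin (n + 1) → ℝ,
        riskSq μ τ (invEst (betaMean n τ)) ≤ riskSq μ τ (invEst v)) ∧
      riskSq μ τ (invEst (betaMean n τ)) =
        ENNReal.ofReal ((1 / ((n : ℝ) + 1)) * ∑ i : Fin (n + 1), betaVar n τ i)) ∧
    (∀ ustar : Fin (n + 1) → ℝ,
      (∀ i, ustar i ∈ Set.Icc (0 : ℝ) 1 ∧ τ (ustar i) = betaMean n τ i) →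
      ∀ (μ : Measure ℝ), IsProbabilityMeasure μ → Continuous (cdfOf μ) →
        ∀ u : Fin (n + 1) → ℝ, (∀ i, u i ∈ Set.Icc (0 : ℝ) 1) →
          riskSq μ τ (fun x t => τ (invEst ustar x t)) ≤
            riskSq μ τ (fun x t => τ (invEst u x t))) :=
  best_invariant_squared_error_general τ hτc hτm

end
end

section
/- For every integer n ≥ 0 and every real number c, the function t ↦ |c − t/(1−t)|·(n+1)·t^n is not Lebesgue-integrable on (0,1); that is, ∫₀¹ |c − t/(1−t)|·(n+1)·t^n dt = +∞. Consequently, under the integrated absolute-error loss for estimating the odds ratio F/(1−F), every invariant estimator has infinite risk. -/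
open MeasureTheory Set
open scoped ENNReal NNReal

noncomputable section

/-- Risk (in `[0,∞]`) of an estimator `d` of `F` under the loss
`∫ |τ(d(t)) − τ(F(t))| dF(t)` with `τ(z) = z/(1−z)` (odds ratio). -/
def riskAbsOdds {n : ℕ} (μ : Measure ℝ) (d : (Fin n → ℝ) → ℝ → ℝ) : ℝ≥0∞ :=
  ∫⁻ x, (∫⁻ t, ENNReal.ofReal
      |d x t / (1 - d x t) - cdfOf μ t / (1 - cdfOf μ t)| ∂μ)
    ∂(sampleMeasure n μ)

/-! Near `t = 1` the odds `t / (1 - t) = (1 - t)⁻¹ - 1` are not integrable, while the weight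
`(n + 1) tⁿ` stays above `2⁻ⁿ` on `(1/2, 1)`. For the risk, a continuous cdf `F` pushes `μ`
forward to the uniform distribution on `[0, 1]`, and an invariant estimator only takes the
finitely many odds values `u i / (1 - u i)`; so for every sample the inner integral dominates
`∫₀¹ (s / (1 - s) - C) ds = ∞`. -/

open ProbabilityTheory

lemma cdfOf_eq_cdf_s5 (μ : Measure ℝ) [IsProbabilityMeasure μ] : cdfOf μ = cdf μ :=
  funext fun t => (cdf_eq_real μ t).symm

lemma measure_cdf_preimage_Iic {μ : Measure ℝ} [IsProbabilityMeasure μ]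
    (hc : Continuous (cdf μ)) (s : ℝ) :
    μ (cdf μ ⁻¹' Iic s) = ENNReal.ofReal (min s 1) := by
  rcases le_or_gt 1 s with hs | hs
  · have huniv : cdf μ ⁻¹' Iic s = univ :=
      eq_univ_of_forall fun t => (cdf_le_one μ t).trans hs
    simp [huniv, min_eq_right hs]
  set S := cdf μ ⁻¹' Iic s
  obtain ⟨b, hb⟩ := ((tendsto_cdf_atTop μ).eventually_const_lt hs).exists_forall_of_atTop
  have hSb : S ⊆ Iio b := fun t ht => lt_of_not_ge fun htb => (hb t htb).not_ge ht
  rcases S.eq_empty_or_nonempty with hS | hS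
  · have hs0 : s ≤ 0 := by
      by_contra! hs0
      obtain ⟨t, ht⟩ := ((tendsto_cdf_atBot μ).eventually_lt_const hs0).exists
      exact hS.subset (show t ∈ S from ht.le)
    simp [hS, ENNReal.ofReal_eq_zero.2 ((min_le_left s 1).trans hs0)]
  set m := sSup S
  have hmS : m ∈ S := (isClosed_Iic.preimage hc).csSup_mem hS ⟨b, fun t ht => (hSb ht).le⟩
  have hSm : S = Iic m := Subset.antisymm (fun t ht => le_csSup ⟨b, fun t ht => (hSb ht).le⟩ ht)
    fun t ht => (monotone_cdf μ ht).trans hmS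
  obtain ⟨t, ⟨hmt, -⟩, hts⟩ := intermediate_value_Icc (hSb hmS).le hc.continuousOn
    ⟨hmS, (hb b le_rfl).le⟩
  have htm : t = m := le_antisymm (show t ∈ Iic m from hSm ▸ hts.le) hmt
  rw [hSm, ← ofReal_cdf, ← htm, hts, min_eq_left hs.le]

theorem map_cdf_eq_volume_restrict_Icc {μ : Measure ℝ} [IsProbabilityMeasure μ]
    (hc : Continuous (cdf μ)) : μ.map (cdf μ) = volume.restrict (Icc 0 1) := by
  have : IsProbabilityMeasure (μ.map (cdf μ)) :=
    Measure.isProbabilityMeasure_map (monotone_cdf μ).measurable.aemeasurable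
  refine Measure.ext_of_Iic _ _ fun s => ?_
  have hIcc : Iic s ∩ Icc 0 1 = Icc 0 (min s 1) := by
    ext t; simp only [mem_inter_iff, mem_Iic, mem_Icc, le_min_iff]; tauto
  rw [Measure.map_apply (monotone_cdf μ).measurable measurableSet_Iic,
    measure_cdf_preimage_Iic hc, Measure.restrict_apply measurableSet_Iic, hIcc,
    Real.volume_Icc, sub_zero]

theorem setLIntegral_Ioo_ofReal_eq_top_of_inv_one_sub_le {a A B : ℝ} (ha : a < 1) (hA : 0 ≤ A)
    {g : ℝ → ℝ} (hg : AEStronglyMeasurable g (volume.restrict (Ioo a 1)))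
    (hle : ∀ t ∈ Ioo a 1, (1 - t)⁻¹ ≤ A * g t + B) :
    ∫⁻ t in Ioo a 1, ENNReal.ofReal (g t) = ⊤ := by
  by_contra hfin
  have hpos : IntegrableOn (fun t => max (g t) 0) (Ioo a 1) := by
    refine ⟨hg.sup aestronglyMeasurable_const, (hasFiniteIntegral_iff_ofReal
      (ae_of_all _ fun t => le_max_right _ _)).2 ?_⟩
    simpa [ENNReal.ofReal_max] using lt_top_iff_ne_top.2 hfin
  have hdom : IntegrableOn (fun t => A * max (g t) 0 + B) (Ioo a 1) :=
    (hpos.const_mul A).add (integrableOn_const measure_Ioo_lt_top.ne)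
  have hinv : IntegrableOn (fun t => (t - 1)⁻¹) (Ioo a 1) := by
    refine hdom.mono' (by fun_prop) ((ae_restrict_iff' measurableSet_Ioo).2 (ae_of_all _ ?_))
    intro t ht
    rw [Real.norm_eq_abs, abs_inv, abs_sub_comm, abs_of_pos (sub_pos.2 ht.2)]
    exact (hle t ht).trans (by gcongr; exact le_max_left _ _)
  have := (intervalIntegrable_iff_integrableOn_Ioo_of_le ha.le).2 hinv
  simp [ha.ne, ha.le] at this

lemma inv_one_sub_le_two_pow_mul_abs_sub_odds_mul_pow (n : ℕ) (c : ℝ) {t : ℝ}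
    (ht : t ∈ Ioo (1 / 2 : ℝ) 1) :
    (1 - t)⁻¹ ≤ 2 ^ n * (|c - t / (1 - t)| * (((n : ℝ) + 1) * t ^ n)) + (1 + |c|) := by
  have hodds : (1 - t)⁻¹ = 1 + t / (1 - t) := by
    field_simp [(sub_pos.2 ht.2).ne']
    ring
  have hweight : 1 ≤ 2 ^ n * (((n : ℝ) + 1) * t ^ n) :=
    calc (1 : ℝ) = (2 * (1 / 2)) ^ n := by norm_num
      _ ≤ 2 ^ n * t ^ n := by rw [mul_pow]; gcongr; exact ht.1.le
      _ ≤ 2 ^ n * (((n : ℝ) + 1) * t ^ n) := by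
        gcongr
        exact le_mul_of_one_le_left (pow_nonneg (by linarith [ht.1]) n)
          (by linarith [n.cast_nonneg (α := ℝ)])
  have hdev : |c - t / (1 - t)| ≤ 2 ^ n * (|c - t / (1 - t)| * (((n : ℝ) + 1) * t ^ n)) := by
    rw [mul_left_comm]
    exact le_mul_of_one_le_right (abs_nonneg _) hweight
  rw [hodds]
  linarith [abs_sub_abs_le_abs_sub (t / (1 - t)) c, abs_sub_comm c (t / (1 - t)),
    le_abs_self (t / (1 - t))]

theorem setLIntegral_abs_sub_odds_mul_pow_eq_top (n : ℕ) (c : ℝ) :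
    ∫⁻ t in Ioo (0 : ℝ) 1,
      ENNReal.ofReal (|c - t / (1 - t)| * (((n : ℝ) + 1) * t ^ n)) = ⊤ := by
  have hnear_one := setLIntegral_Ioo_ofReal_eq_top_of_inv_one_sub_le (by norm_num)
    (by positivity) (by fun_prop) fun t ht => inv_one_sub_le_two_pow_mul_abs_sub_odds_mul_pow n c ht
  exact top_le_iff.1 (hnear_one.ge.trans (lintegral_mono_set (Ioo_subset_Ioo_left (by norm_num))))

theorem lintegral_abs_sub_odds_cdf_eq_top {μ : Measure ℝ} [IsProbabilityMeasure μ]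
    (hc : Continuous (cdf μ)) {v : ℝ → ℝ} {C : ℝ} (hv : ∀ t, |v t| ≤ C) :
    ∫⁻ t, ENNReal.ofReal |v t - cdf μ t / (1 - cdf μ t)| ∂μ = ⊤ := by
  have hodds : ∫⁻ s in Ioo 0 1, ENNReal.ofReal (s / (1 - s) - C) = ⊤ := by
    refine setLIntegral_Ioo_ofReal_eq_top_of_inv_one_sub_le (A := 1) (B := 1 + C) one_pos
      zero_le_one (by fun_prop : Measurable fun s : ℝ => s / (1 - s) - C).aestronglyMeasurable
      fun s hs => le_of_eq ?_
    field_simp [(sub_pos.2 hs.2).ne']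
    ring
  have hgap : ∀ t, cdf μ t / (1 - cdf μ t) - C ≤ |v t - cdf μ t / (1 - cdf μ t)| := fun t => by
    linarith [hv t, neg_abs_le (v t - cdf μ t / (1 - cdf μ t)), le_abs_self (v t)]
  refine top_le_iff.1 <| calc
    ⊤ = ∫⁻ s in Ioo 0 1, ENNReal.ofReal (s / (1 - s) - C) := hodds.symm
    _ ≤ ∫⁻ s in Icc 0 1, ENNReal.ofReal (s / (1 - s) - C) :=
      lintegral_mono_set Ioo_subset_Icc_self
    _ = ∫⁻ s, ENNReal.ofReal (s / (1 - s) - C) ∂(μ.map (cdf μ)) := by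
      rw [map_cdf_eq_volume_restrict_Icc hc]
    _ = ∫⁻ t, ENNReal.ofReal (cdf μ t / (1 - cdf μ t) - C) ∂μ :=
      lintegral_map (by fun_prop) (monotone_cdf μ).measurable
    _ ≤ _ := lintegral_mono fun t => ENNReal.ofReal_le_ofReal (hgap t)

theorem riskAbsOdds_invEst_eq_top {n : ℕ} {μ : Measure ℝ} [IsProbabilityMeasure μ]
    (hc : Continuous (cdfOf μ)) (u : Fin (n + 1) → ℝ) : riskAbsOdds μ (invEst u) = ⊤ := by
  have : IsProbabilityMeasure (sampleMeasure n μ) := by unfold sampleMeasure; infer_instance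
  rw [cdfOf_eq_cdf_s5] at hc
  have hbdd : ∀ x t, |invEst u x t / (1 - invEst u x t)| ≤ ∑ i, |u i / (1 - u i)| := fun x t =>
    Finset.single_le_sum (f := fun i => |u i / (1 - u i)|) (fun i _ => abs_nonneg _)
      (Finset.mem_univ _)
  simp only [riskAbsOdds, cdfOf_eq_cdf_s5,
    fun x => lintegral_abs_sub_odds_cdf_eq_top hc (hbdd x), lintegral_const, measure_univ, mul_one]

/-- `∫₀¹ |c − t/(1−t)|·(n+1)·t^n dt = +∞` for every `n ≥ 0` and
every real `c`; consequently, under the integrated absolute-error loss for the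
odds ratio `F/(1−F)`, every invariant estimator has infinite risk. -/
theorem odds_ratio_infinite_risk :
    (∀ (n : ℕ) (c : ℝ),
      ∫⁻ t in Set.Ioo (0 : ℝ) 1,
        ENNReal.ofReal (|c - t / (1 - t)| * (((n : ℝ) + 1) * t ^ n)) = ⊤) ∧
    (∀ (n : ℕ), 1 ≤ n →
      ∀ (μ : Measure ℝ), IsProbabilityMeasure μ → Continuous (cdfOf μ) →
        ∀ u : Fin (n + 1) → ℝ, (∀ i, u i ∈ Set.Icc (0 : ℝ) 1) →
          riskAbsOdds μ (invEst u) = ⊤) :=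
  ⟨setLIntegral_abs_sub_odds_mul_pow_eq_top,
    fun _ _ _ _ hc u _ => riskAbsOdds_invEst_eq_top hc u⟩

end
end
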